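/- arXiv:2211.17018 — 2 statements merged into one kernel-verified Lean document; each statement's English description precedes it below -/
import Mathlib

section
/- Let L̄ = Σ_{i=1}^p L_i for nonnegative constants L_1,...,L_p. Every convex, differentiable function f : ℝ^d → ℝ that is L-coordinate-wise smooth with respect to a partition of ℝ^d into blocks of dimensions d_1,...,d_p is L̄-smooth, i.e. ‖∇f(x+h) − ∇f(x)‖ ≤ L̄ ‖h‖ for all x, h ∈ ℝ^d. (Second inclusion of Lemma 1.1: F^coord_L ⊆ F_{L̄}.) -/
open scoped RealInnerProductSpace

noncomputable section

/-- `ℝ^d = ℝ^{d_1} × ⋯ × ℝ^{d_p}` with the Euclidean norm. -/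
abbrev BlockSpace (p : ℕ) (d : Fin p → ℕ) : Type :=
  PiLp 2 (fun i : Fin p => EuclideanSpace ℝ (Fin (d i)))

/-- `embed i h = U_i h`: the vector of `ℝ^d` whose block `i` equals `h`, all other blocks 0. -/
def embed {p : ℕ} {d : Fin p → ℕ} (i : Fin p) (h : EuclideanSpace ℝ (Fin (d i))) :
    BlockSpace p d :=
  (WithLp.equiv 2 _).symm (Pi.single i h)

/-- `partialGrad f x i = ∇_i f(x) = U_iᵀ ∇f(x)`: block `i` of the gradient of `f` at `x`. -/
def partialGrad {p : ℕ} {d : Fin p → ℕ} (f : BlockSpace p d → ℝ) (x : BlockSpace p d)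
    (i : Fin p) : EuclideanSpace ℝ (Fin (d i)) :=
  (WithLp.equiv 2 _) (gradient f x) i

section General
open Set
variable {E : Type*} [NormedAddCommGroup E] [InnerProductSpace ℝ E] [CompleteSpace E]

lemma my_inner_gradient (f : E → ℝ) (y v : E) : ⟪gradient f y, v⟫ = fderiv ℝ f y v :=
  InnerProductSpace.toDual_symm_apply

lemma my_line_hasDerivAt (f : E → ℝ) (hdiff : Differentiable ℝ f) (x w : E) (t : ℝ) :
    HasDerivAt (fun s : ℝ => f (x + s • w)) ⟪gradient f (x + t • w), w⟫ t := by
  have h1 : HasDerivAt (fun s : ℝ => x + s • w) w t := by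
    simpa using ((hasDerivAt_id t).smul_const w).const_add x
  have h2 := (hdiff (x + t • w)).hasFDerivAt.comp_hasDerivAt t h1
  rw [my_inner_gradient]
  exact h2
lemma my_convex_lower (f : E → ℝ) (hconv : ConvexOn ℝ Set.univ f)
    (hdiff : Differentiable ℝ f) (x y : E) :
    f x + ⟪gradient f x, y - x⟫ ≤ f y := by
  set φ : ℝ → ℝ := fun t => f (x + t • (y - x)) with hφ
  have hd : HasDerivAt φ ⟪gradient f x, y - x⟫ 0 := by
    simpa using my_line_hasDerivAt f hdiff x (y - x) 0
  have htend : Filter.Tendsto (slope φ 0) (nhdsWithin 0 (Set.Ioi 0)) (nhds ⟪gradient f x, y - x⟫) :=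
    (hasDerivAt_iff_tendsto_slope.mp hd).mono_left
      (nhdsWithin_mono _ (fun t ht => ne_of_gt ht))
  have hev : ∀ᶠ t in nhdsWithin 0 (Set.Ioi 0), slope φ 0 t ≤ f y - f x := by
    filter_upwards [Ioo_mem_nhdsGT_of_mem (by norm_num : (0:ℝ) ∈ Set.Ico (0:ℝ) 1)] with t ht
    have hxy : x + t • (y - x) = (1 - t) • x + t • y := by
      rw [smul_sub, sub_smul, one_smul]; abel
    have hc := hconv.2 (Set.mem_univ x) (Set.mem_univ y)
      (by linarith [ht.2] : (0:ℝ) ≤ 1 - t) (le_of_lt ht.1) (by ring)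
    have hφt : φ t ≤ (1 - t) * f x + t * f y := by rw [hφ]; simp only; rw [hxy]; exact hc
    have hφ0 : φ 0 = f x := by simp [hφ]
    rw [slope_def_field, hφ0, sub_zero, div_le_iff₀ ht.1]
    nlinarith [ht.1]
  have := le_of_tendsto htend hev
  linarith

lemma my_coco (f : E → ℝ) (M : ℝ) (hM : 0 < M)
    (lower : ∀ x y : E, f x + ⟪gradient f x, y - x⟫ ≤ f y)
    (upper : ∀ x y : E, f y ≤ f x + ⟪gradient f x, y - x⟫ + M / 2 * ‖y - x‖ ^ 2) :
    ∀ x y : E, ‖gradient f y - gradient f x‖ ≤ M * ‖y - x‖ := by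
  have step : ∀ x y : E,
      f x + ⟪gradient f x, y - x⟫ + 1 / (2 * M) * ‖gradient f y - gradient f x‖ ^ 2 ≤ f y := by
    intro x y
    set g : E := gradient f y - gradient f x with hg
    set z : E := y - (1 / M) • g with hz
    have h1 := lower x z
    have h2 := upper y z
    have hzy : z - y = -((1 / M) • g) := by rw [hz]; abel
    have hzx : z - x = (y - x) - (1 / M) • g := by rw [hz]; abel
    have e1 : ‖z - y‖ ^ 2 = (1 / M) ^ 2 * ‖g‖ ^ 2 := by
      rw [hzy, norm_neg, norm_smul, mul_pow, Real.norm_eq_abs,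
        abs_of_pos (by positivity : (0:ℝ) < 1 / M)]
    have e2 : ⟪gradient f y, z - y⟫ = -(1 / M * ⟪gradient f y, g⟫) := by
      rw [hzy, inner_neg_right, real_inner_smul_right]
    have e3 : ⟪gradient f x, z - x⟫ = ⟪gradient f x, y - x⟫ - 1 / M * ⟪gradient f x, g⟫ := by
      rw [hzx, inner_sub_right, real_inner_smul_right]
    have e4 : ⟪gradient f y, g⟫ - ⟪gradient f x, g⟫ = ‖g‖ ^ 2 := by
      rw [← inner_sub_left, ← hg, real_inner_self_eq_norm_sq]
    rw [e2, e1] at h2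
    rw [e3] at h1
    have c1 : M / 2 * ((1 / M) ^ 2 * ‖g‖ ^ 2) = 1 / (2 * M) * ‖g‖ ^ 2 := by
      field_simp
    have c2 : 1 / M * ⟪gradient f y, g⟫ - 1 / M * ⟪gradient f x, g⟫ = 1 / M * ‖g‖ ^ 2 := by
      rw [← mul_sub, e4]
    have c3 : 1 / M * ‖g‖ ^ 2 = 2 * (1 / (2 * M) * ‖g‖ ^ 2) := by field_simp
    linarith
  intro x y
  set g : E := gradient f y - gradient f x with hg
  have k1 := step x y
  have k2 := step y x
  have e5 : ⟪gradient f y, x - y⟫ = -⟪gradient f y, y - x⟫ := by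
    rw [← inner_neg_right]; congr 1; abel
  have e6 : ‖gradient f x - gradient f y‖ = ‖g‖ := norm_sub_rev _ _
  have e7 : ⟪gradient f y, y - x⟫ - ⟪gradient f x, y - x⟫ = ⟪g, y - x⟫ := by
    rw [← inner_sub_left]
  have hcs : ⟪g, y - x⟫ ≤ ‖g‖ * ‖y - x‖ := real_inner_le_norm g (y - x)
  -- from k1 + k2 : (1/M) ‖g‖^2 ≤ ⟪g, y-x⟫
  have key : 1 / M * ‖g‖ ^ 2 ≤ ‖g‖ * ‖y - x‖ := by
    rw [e5, e6] at k2
    have c3 : 1 / M * ‖g‖ ^ 2 = 2 * (1 / (2 * M) * ‖g‖ ^ 2) := by field_simp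
    linarith
  rcases eq_or_lt_of_le (norm_nonneg g) with h0 | h0
  · rw [← h0]; positivity
  · have hkey : ‖g‖ ^ 2 ≤ M * (‖g‖ * ‖y - x‖) := by
      have h' := mul_le_mul_of_nonneg_left key hM.le
      have : M * (1 / M * ‖g‖ ^ 2) = ‖g‖ ^ 2 := by field_simp
      linarith
    nlinarith [h0]

end General


variable {p : ℕ} {d : Fin p → ℕ}

lemma embed_smul (i : Fin p) (t : ℝ) (v : EuclideanSpace ℝ (Fin (d i))) :
    embed i (t • v) = t • embed i v := by
  simp [embed, Pi.single_smul]

lemma inner_embed (g : BlockSpace p d) (i : Fin p) (v : EuclideanSpace ℝ (Fin (d i))) :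
    ⟪g, embed i v⟫ = ⟪(WithLp.equiv 2 _) g i, v⟫ := by
  rw [PiLp.inner_apply]
  rw [Finset.sum_eq_single i]
  · simp [embed]
  · intro j _ hj
    simp [embed, Pi.single_eq_of_ne hj]
  · simp

lemma my_blockDescent (L : Fin p → ℝ) (f : BlockSpace p d → ℝ)
    (hdiff : Differentiable ℝ f)
    (hcoord : ∀ (i : Fin p) (x : BlockSpace p d) (hi : EuclideanSpace ℝ (Fin (d i))),
      ‖partialGrad f (x + embed i hi) i - partialGrad f x i‖ ≤ L i * ‖hi‖)
    (i : Fin p) (x : BlockSpace p d) (v : EuclideanSpace ℝ (Fin (d i))) :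
    f (x + embed i v) ≤ f x + ⟪gradient f x, embed i v⟫ + L i / 2 * ‖v‖ ^ 2 := by
  set w := embed i v with hw
  set D : ℝ → ℝ := fun t => ⟪gradient f (x + t • w), w⟫ with hD
  set q : ℝ → ℝ := fun t => f (x + t • w) - D 0 * t - L i * ‖v‖ ^ 2 / 2 * t ^ 2 with hq
  have hqd : ∀ t : ℝ, HasDerivAt q (D t - D 0 - L i * ‖v‖ ^ 2 * t) t := by
    intro t
    have h1 := my_line_hasDerivAt f hdiff x w t
    have h2 : HasDerivAt (fun t : ℝ => D 0 * t) (D 0) t := by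
      simpa using (hasDerivAt_id t).const_mul (D 0)
    have h3 : HasDerivAt (fun t : ℝ => L i * ‖v‖ ^ 2 / 2 * t ^ 2)
        (L i * ‖v‖ ^ 2 * t) t := by
      have h4 := (hasDerivAt_pow 2 t).const_mul (L i * ‖v‖ ^ 2 / 2)
      refine h4.congr_deriv ?_
      rw [show (2:ℕ) - 1 = 1 from rfl, pow_one]
      ring
    exact (h1.sub h2).sub h3
  have hderiv_le : ∀ t ∈ interior (Set.Icc (0:ℝ) 1), deriv q t ≤ 0 := by
    intro t ht
    rw [interior_Icc] at ht
    rw [(hqd t).deriv]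
    have key : D t - D 0 ≤ L i * ‖v‖ ^ 2 * t := by
      have hDsub : D t - D 0 = ⟪gradient f (x + t • w) - gradient f x, w⟫ := by
        rw [hD]; simp only [zero_smul, add_zero, ← inner_sub_left]
      rw [hDsub]
      have hxtw : x + t • w = x + embed i (t • v) := by rw [embed_smul]
      have hsub : (WithLp.equiv 2 _) (gradient f (x + t • w) - gradient f x) i
          = partialGrad f (x + embed i (t • v)) i - partialGrad f x i := by
        rw [partialGrad, partialGrad, ← hxtw]; rfl
      rw [hw, inner_embed, hsub]
      calc ⟪partialGrad f (x + embed i (t • v)) i - partialGrad f x i, v⟫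
          ≤ ‖partialGrad f (x + embed i (t • v)) i - partialGrad f x i‖ * ‖v‖ :=
            real_inner_le_norm _ _
        _ ≤ (L i * ‖t • v‖) * ‖v‖ :=
            mul_le_mul_of_nonneg_right (hcoord i x (t • v)) (norm_nonneg v)
        _ = L i * ‖v‖ ^ 2 * t := by
            rw [norm_smul, Real.norm_eq_abs, abs_of_pos ht.1]; ring
    linarith
  have hanti : AntitoneOn q (Set.Icc 0 1) := by
    apply antitoneOn_of_deriv_nonpos (convex_Icc 0 1)
    · exact (Differentiable.continuous (fun t => (hqd t).differentiableAt)).continuousOn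
    · exact fun t ht => ((hqd t).differentiableAt).differentiableWithinAt
    · exact hderiv_le
  have h01 := hanti (Set.left_mem_Icc.mpr zero_le_one) (Set.right_mem_Icc.mpr zero_le_one)
    zero_le_one
  have hq1 : q 1 = f (x + w) - D 0 - L i * ‖v‖ ^ 2 / 2 := by
    rw [hq]; simp
  have hq0 : q 0 = f x := by rw [hq]; simp
  have hD0 : D 0 = ⟪gradient f x, w⟫ := by rw [hD]; simp
  rw [hq1, hq0, hD0] at h01
  rw [hw] at *
  linarith

lemma sum_embed (y : BlockSpace p d) :
    ∑ i, embed i ((WithLp.equiv 2 _) y i) = y := by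
  have hrepr : ∀ i (v : EuclideanSpace ℝ (Fin (d i))), embed i v =
      (WithLp.linearEquiv 2 ℝ (∀ i, EuclideanSpace ℝ (Fin (d i)))).symm (Pi.single i v) := by
    intro i v; rfl
  rw [Finset.sum_congr rfl (fun i _ => hrepr i _), ← map_sum]
  have hs : ∑ i, Pi.single i ((WithLp.equiv 2 (∀ i, EuclideanSpace ℝ (Fin (d i)))) y i) =
      (WithLp.equiv 2 (∀ i, EuclideanSpace ℝ (Fin (d i)))) y :=
    Finset.univ_sum_single _
  rw [hs]
  rfl

lemma norm_sq_blocks (y : BlockSpace p d) :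
    ‖y‖ ^ 2 = ∑ i, ‖(WithLp.equiv 2 _) y i‖ ^ 2 := by
  rw [PiLp.norm_sq_eq_of_L2]
  rfl

lemma my_quadUB' (hp : 0 < p) (L : Fin p → ℝ) (hLpos : ∀ i, 0 < L i)
    (f : BlockSpace p d → ℝ) (hconv : ConvexOn ℝ Set.univ f)
    (hdescent : ∀ (i : Fin p) (x : BlockSpace p d) (v : EuclideanSpace ℝ (Fin (d i))),
      f (x + embed i v) ≤ f x + ⟪gradient f x, embed i v⟫ + L i / 2 * ‖v‖ ^ 2)
    (x y : BlockSpace p d) :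
    f y ≤ f x + ⟪gradient f x, y - x⟫ + (∑ i, L i) / 2 * ‖y - x‖ ^ 2 := by
  haveI : Nonempty (Fin p) := Fin.pos_iff_nonempty.mp hp
  set S : ℝ := ∑ i, L i with hS
  have hSpos : 0 < S := Finset.sum_pos (fun i _ => hLpos i) Finset.univ_nonempty
  set lam : Fin p → ℝ := fun i => L i / S with hlam
  have hlampos : ∀ i, 0 < lam i := fun i => div_pos (hLpos i) hSpos
  have hlamsum : ∑ i, lam i = 1 := by
    rw [hlam]; rw [← Finset.sum_div, ← hS]; field_simp
  set h' : ∀ i, EuclideanSpace ℝ (Fin (d i)) := fun i => (WithLp.equiv 2 _) (y - x) i with hh'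
  set z : Fin p → BlockSpace p d := fun i => x + embed i ((1 / lam i) • h' i) with hz
  have hzsum : ∑ i, lam i • z i = y := by
    have : ∀ i, lam i • z i = lam i • x + embed i (h' i) := by
      intro i
      rw [hz]
      simp only
      rw [smul_add, embed_smul, smul_smul, mul_one_div_cancel (hlampos i).ne', one_smul]
    rw [Finset.sum_congr rfl (fun i _ => this i), Finset.sum_add_distrib, ← Finset.sum_smul,
      hlamsum, one_smul, sum_embed]
    abel
  have hjensen : f y ≤ ∑ i, lam i * f (z i) := by
    rw [← hzsum]
    exact hconv.map_sum_le (fun i _ => (hlampos i).le) hlamsum (fun i _ => Set.mem_univ _)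
  have hperterm : ∀ i ∈ Finset.univ, lam i * f (z i) ≤
      lam i * f x + ⟪gradient f x, embed i (h' i)⟫ + S / 2 * ‖h' i‖ ^ 2 := by
    intro i _
    have hd := hdescent i x ((1 / lam i) • h' i)
    have e1 : ⟪gradient f x, embed i ((1 / lam i) • h' i)⟫
        = (1 / lam i) * ⟪gradient f x, embed i (h' i)⟫ := by
      rw [embed_smul, real_inner_smul_right]
    have e2 : ‖(1 / lam i) • h' i‖ ^ 2 = (1 / lam i) ^ 2 * ‖h' i‖ ^ 2 := by
      rw [norm_smul, mul_pow, Real.norm_eq_abs, abs_of_pos (one_div_pos.mpr (hlampos i))]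
    rw [e1, e2] at hd
    have hmul := mul_le_mul_of_nonneg_left hd (hlampos i).le
    have e3 : lam i * (f x + 1 / lam i * ⟪gradient f x, embed i (h' i)⟫
        + L i / 2 * ((1 / lam i) ^ 2 * ‖h' i‖ ^ 2))
        = lam i * f x + ⟪gradient f x, embed i (h' i)⟫ + S / 2 * ‖h' i‖ ^ 2 := by
      rw [hlam]
      have hLne : (L i : ℝ) ≠ 0 := (hLpos i).ne'
      field_simp
    rw [e3] at hmul
    exact hmul
  have hsum := le_trans hjensen (Finset.sum_le_sum hperterm)
  have hfinal : ∑ i, (lam i * f x + ⟪gradient f x, embed i (h' i)⟫ + S / 2 * ‖h' i‖ ^ 2)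
      = f x + ⟪gradient f x, y - x⟫ + S / 2 * ‖y - x‖ ^ 2 := by
    rw [Finset.sum_add_distrib, Finset.sum_add_distrib, ← Finset.sum_mul, hlamsum, one_mul,
      ← inner_sum, ← Finset.mul_sum]
    congr 2
    · rw [hh']
      congr 1
      exact sum_embed (y - x)
    · rw [norm_sq_blocks (y - x)]
  rw [hfinal] at hsum
  exact hsum


/-- Second inclusion of Lemma 1.1: every convex differentiable `L`-coordinate-wise smooth
function is `L̄`-smooth, where `L̄ = ∑_i L_i`. -/
theorem coordinatewise_smooth_implies_smooth
    {p : ℕ} (hp : 0 < p) {d : Fin p → ℕ}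
    (L : Fin p → ℝ) (hL : ∀ i, 0 ≤ L i)
    (f : BlockSpace p d → ℝ)
    (hconv : ConvexOn ℝ Set.univ f)
    (hdiff : Differentiable ℝ f)
    (hcoord : ∀ (i : Fin p) (x : BlockSpace p d) (hi : EuclideanSpace ℝ (Fin (d i))),
      ‖partialGrad f (x + embed i hi) i - partialGrad f x i‖ ≤ L i * ‖hi‖) :
    ∀ x h : BlockSpace p d,
      ‖gradient f (x + h) - gradient f x‖ ≤ (∑ i, L i) * ‖h‖ := by
  intro x h
  rcases eq_or_ne h 0 with rfl | hne
  · simp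
  · have hnorm : 0 < ‖h‖ := norm_pos_iff.mpr hne
    haveI : Nonempty (Fin p) := Fin.pos_iff_nonempty.mp hp
    apply le_of_forall_pos_le_add
    intro ε hε
    set δ : ℝ := ε / (p * ‖h‖) with hδ
    have hppos : (0:ℝ) < p := Nat.cast_pos.mpr hp
    have hδpos : 0 < δ := div_pos hε (mul_pos hppos hnorm)
    set L' : Fin p → ℝ := fun i => L i + δ with hL'
    have hL'pos : ∀ i, 0 < L' i := fun i => add_pos_of_nonneg_of_pos (hL i) hδpos
    have hcoord' : ∀ (i : Fin p) (y : BlockSpace p d) (hi : EuclideanSpace ℝ (Fin (d i))),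
        ‖partialGrad f (y + embed i hi) i - partialGrad f y i‖ ≤ L' i * ‖hi‖ := by
      intro i y hi
      refine (hcoord i y hi).trans ?_
      have hnn : 0 ≤ δ * ‖hi‖ := mul_nonneg hδpos.le (norm_nonneg hi)
      simp only [hL']
      nlinarith [norm_nonneg hi, hnn]
    have hdesc := fun i y v => my_blockDescent L' f hdiff hcoord' i y v
    have upper : ∀ a b : BlockSpace p d,
        f b ≤ f a + ⟪gradient f a, b - a⟫ + (∑ i, L' i) / 2 * ‖b - a‖ ^ 2 :=
      fun a b => my_quadUB' hp L' hL'pos f hconv hdesc a b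
    have lower : ∀ a b : BlockSpace p d, f a + ⟪gradient f a, b - a⟫ ≤ f b :=
      fun a b => my_convex_lower f hconv hdiff a b
    have hSpos : 0 < ∑ i, L' i := Finset.sum_pos (fun i _ => hL'pos i) Finset.univ_nonempty
    have hco := my_coco f (∑ i, L' i) hSpos lower upper x (x + h)
    rw [add_sub_cancel_left] at hco
    have hsum : ∑ i, L' i = (∑ i, L i) + p * δ := by
      rw [hL', Finset.sum_add_distrib, Finset.sum_const, Finset.card_univ, Fintype.card_fin,
        nsmul_eq_mul]
    have hε' : (p : ℝ) * δ * ‖h‖ = ε := by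
      rw [hδ]; field_simp
    calc ‖gradient f (x + h) - gradient f x‖ ≤ (∑ i, L' i) * ‖h‖ := hco
      _ = (∑ i, L i) * ‖h‖ + ε := by rw [hsum, ← hε']; ring
end
end

section
/- (Sufficiency part of Theorem 2.2, smooth convex interpolation.) Let L > 0 and let {(x^(n), g^(n), f^(n))}_{n=1,...,N} ⊂ ℝ^d × ℝ^d × ℝ be a finite set of triples satisfying, for all n, l ∈ {1,...,N}, f^(n) ≥ f^(l) + ⟨g^(l), x^(n) − x^(l)⟩ + (1/(2L)) ‖g^(n) − g^(l)‖². Then there exists a convex, differentiable, L-smooth function f : ℝ^d → ℝ such that f(x^(n)) = f^(n) and ∇f(x^(n)) = g^(n) for all n ∈ {1,...,N}. -/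
open scoped RealInnerProductSpace

noncomputable section

open Finset

namespace SCIAux
variable {E : Type*} [NormedAddCommGroup E] [InnerProductSpace ℝ E]
variable {N : ℕ}

def Amap (y : Fin N → E) (α : Fin N → ℝ) : E := ∑ i, α i • y i
def Sval (c : Fin N → ℝ) (α : Fin N → ℝ) : ℝ := ∑ i, α i * c i
def Qf (L : ℝ) (y : Fin N → E) (c : Fin N → ℝ) (z : E) (α : Fin N → ℝ) : ℝ :=
  L / 2 * ‖z - Amap y α‖ ^ 2 + Sval c α

lemma Amap_combo (y : Fin N → E) (α β : Fin N → ℝ) (a b : ℝ) :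
    Amap y (a • α + b • β) = a • Amap y α + b • Amap y β := by
  simp only [Amap, Finset.smul_sum, ← Finset.sum_add_distrib]
  refine Finset.sum_congr rfl fun i _ => ?_
  simp [Pi.add_apply, Pi.smul_apply, add_smul, mul_smul]

lemma Sval_combo (c : Fin N → ℝ) (α β : Fin N → ℝ) (a b : ℝ) :
    Sval c (a • α + b • β) = a * Sval c α + b * Sval c β := by
  simp only [Sval, Finset.mul_sum, ← Finset.sum_add_distrib]
  refine Finset.sum_congr rfl fun i _ => ?_
  simp only [Pi.add_apply, Pi.smul_apply, smul_eq_mul]; ring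

lemma norm_sub_smul_sq (u v : E) (t : ℝ) :
    ‖u - t • v‖ ^ 2 = ‖u‖ ^ 2 - 2 * (t * ⟪u, v⟫) + t ^ 2 * ‖v‖ ^ 2 := by
  rw [norm_sub_sq_real, real_inner_smul_right, norm_smul]
  simp [mul_pow]

/-- Strong minimality: a minimizer of `Qf` over the simplex beats any other point
by `L/2` times the squared distance of the images. -/
lemma strong_min {L : ℝ} (hL : 0 < L) (y : Fin N → E) (c : Fin N → ℝ) {z : E}
    {α β : Fin N → ℝ} (hα : α ∈ stdSimplex ℝ (Fin N)) (hβ : β ∈ stdSimplex ℝ (Fin N))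
    (hmin : ∀ γ ∈ stdSimplex ℝ (Fin N), Qf L y c z α ≤ Qf L y c z γ) :
    Qf L y c z α + L / 2 * ‖Amap y β - Amap y α‖ ^ 2 ≤ Qf L y c z β := by
  set u := Amap y α with hu
  set v := Amap y β with hv
  set a := Sval c α with ha
  set b := Sval c β with hb
  -- step 1 : L * ⟪z - u, v - u⟫ ≤ b - a
  have key : ∀ t : ℝ, 0 < t → t ≤ 1 →
      L * ⟪z - u, v - u⟫ ≤ b - a + t * (L / 2 * ‖v - u‖ ^ 2) := by
    intro t ht ht1
    have hmem : (1 - t) • α + t • β ∈ stdSimplex ℝ (Fin N) :=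
      convex_stdSimplex ℝ (Fin N) hα hβ (by linarith) ht.le (by ring)
    have h1 := hmin _ hmem
    have hA : Amap y ((1 - t) • α + t • β) = u + t • (v - u) := by
      rw [Amap_combo, ← hu, ← hv, smul_sub]
      module
    have hS : Sval c ((1 - t) • α + t • β) = (1 - t) * a + t * b := by
      rw [Sval_combo, ← ha, ← hb]
    rw [Qf, Qf, hA, hS, ← hu, ← ha] at h1
    have hsq : ‖z - (u + t • (v - u))‖ ^ 2
        = ‖z - u‖ ^ 2 - 2 * (t * ⟪z - u, v - u⟫) + t ^ 2 * ‖v - u‖ ^ 2 := by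
      rw [show z - (u + t • (v - u)) = (z - u) - t • (v - u) by abel, norm_sub_smul_sq]
    rw [hsq] at h1
    -- h1 : L/2 * ‖z-u‖^2 + a ≤ L/2 * (... ) + ((1-t)*a + t*b)
    have ht' : 0 < t := ht
    nlinarith [sq_nonneg t, norm_nonneg (v - u)]
  have step1 : L * ⟪z - u, v - u⟫ ≤ b - a := by
    by_contra hc
    push_neg at hc
    set C := L / 2 * ‖v - u‖ ^ 2 with hC
    have hC0 : 0 ≤ C := by positivity
    set ε := L * ⟪z - u, v - u⟫ - (b - a) with hε
    have hε0 : 0 < ε := by simp [hε]; linarith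
    have ht0 : 0 < min 1 (ε / (C + 1)) := by positivity
    have ht1 : min 1 (ε / (C + 1)) ≤ 1 := min_le_left _ _
    have := key _ ht0 ht1
    have hlt : min 1 (ε / (C + 1)) * C < ε := by
      calc min 1 (ε / (C + 1)) * C ≤ (ε / (C + 1)) * C := by
            apply mul_le_mul_of_nonneg_right (min_le_right _ _) hC0
        _ < ε := by
            rw [div_mul_eq_mul_div, div_lt_iff₀ (by linarith)]
            nlinarith
    linarith
  -- step 2
  have hnorm : ‖z - v‖ ^ 2 = ‖z - u‖ ^ 2 - 2 * ⟪z - u, v - u⟫ + ‖v - u‖ ^ 2 := by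
    have : z - v = (z - u) - (1 : ℝ) • (v - u) := by module
    rw [this, norm_sub_smul_sq]; ring
  rw [Qf, Qf, ← hu, ← hv, ← ha, ← hb, hnorm]
  nlinarith [norm_nonneg (v - u)]

end SCIAux

namespace SCIAux2
open SCIAux
variable {E : Type*} [NormedAddCommGroup E] [InnerProductSpace ℝ E] [CompleteSpace E]
variable {N : ℕ}

lemma continuous_Qf (L : ℝ) (y : Fin N → E) (c : Fin N → ℝ) (z : E) :
    Continuous fun α : Fin N → ℝ => Qf L y c z α := by
  unfold Qf Amap Sval; fun_prop

lemma exists_min (L : ℝ) (y : Fin N → E) (c : Fin N → ℝ) (hN : 0 < N) (z : E) :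
    ∃ α ∈ stdSimplex ℝ (Fin N), ∀ β ∈ stdSimplex ℝ (Fin N), Qf L y c z α ≤ Qf L y c z β := by
  obtain ⟨α, hα, hmin⟩ := (isCompact_stdSimplex ℝ (Fin N)).exists_isMinOn
    ⟨Pi.single ⟨0, hN⟩ 1, single_mem_stdSimplex ℝ _⟩
    ((continuous_Qf L y c z).continuousOn)
  exact ⟨α, hα, fun β hβ => hmin hβ⟩

variable (L : ℝ) (y : Fin N → E) (c : Fin N → ℝ) (hN : 0 < N)

def asel (z : E) : Fin N → ℝ := (exists_min L y c hN z).choose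

lemma asel_mem (z : E) : asel L y c hN z ∈ stdSimplex ℝ (Fin N) :=
  (exists_min L y c hN z).choose_spec.1

def pmap (z : E) : E := Amap y (asel L y c hN z)

def fenv (z : E) : ℝ := Qf L y c z (asel L y c hN z)

lemma fenv_le (z : E) {β : Fin N → ℝ} (hβ : β ∈ stdSimplex ℝ (Fin N)) :
    fenv L y c hN z ≤ Qf L y c z β :=
  (exists_min L y c hN z).choose_spec.2 β hβ

lemma fenv_eq (z : E) :
    fenv L y c hN z = L / 2 * ‖z - pmap L y c hN z‖ ^ 2 + Sval c (asel L y c hN z) := rfl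

lemma strong (hL : 0 < L) (z : E) {β : Fin N → ℝ} (hβ : β ∈ stdSimplex ℝ (Fin N)) :
    fenv L y c hN z + L / 2 * ‖Amap y β - pmap L y c hN z‖ ^ 2 ≤ Qf L y c z β :=
  strong_min hL y c (asel_mem L y c hN z) hβ
    (fun γ hγ => fenv_le L y c hN z hγ)


lemma firm (hL : 0 < L) (z w : E) :
    ‖pmap L y c hN z - pmap L y c hN w‖ ^ 2 ≤ ⟪z - w, pmap L y c hN z - pmap L y c hN w⟫ := by
  set pz := pmap L y c hN z with hpz
  set pw := pmap L y c hN w with hpw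
  have h1 := strong L y c hN hL z (asel_mem L y c hN w)
  have h2 := strong L y c hN hL w (asel_mem L y c hN z)
  rw [fenv_eq, ← hpz] at h1
  rw [fenv_eq, ← hpw] at h2
  have hq1 : Qf L y c z (asel L y c hN w) = L / 2 * ‖z - pw‖ ^ 2 + Sval c (asel L y c hN w) := rfl
  have hq2 : Qf L y c w (asel L y c hN z) = L / 2 * ‖w - pz‖ ^ 2 + Sval c (asel L y c hN z) := rfl
  have hA1 : Amap y (asel L y c hN w) = pw := rfl
  have hA2 : Amap y (asel L y c hN z) = pz := rfl
  rw [hq1, hA1] at h1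
  rw [hq2, hA2] at h2
  have e1 : ‖z - pz‖ ^ 2 = ‖z‖ ^ 2 - 2 * ⟪z, pz⟫ + ‖pz‖ ^ 2 := norm_sub_sq_real z pz
  have e2 : ‖z - pw‖ ^ 2 = ‖z‖ ^ 2 - 2 * ⟪z, pw⟫ + ‖pw‖ ^ 2 := norm_sub_sq_real z pw
  have e3 : ‖w - pw‖ ^ 2 = ‖w‖ ^ 2 - 2 * ⟪w, pw⟫ + ‖pw‖ ^ 2 := norm_sub_sq_real w pw
  have e4 : ‖w - pz‖ ^ 2 = ‖w‖ ^ 2 - 2 * ⟪w, pz⟫ + ‖pz‖ ^ 2 := norm_sub_sq_real w pz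
  have e5 : ‖pw - pz‖ ^ 2 = ‖pw‖ ^ 2 - 2 * ⟪pz, pw⟫ + ‖pz‖ ^ 2 := by
    rw [norm_sub_sq_real, real_inner_comm]
  have e6 : ‖pz - pw‖ ^ 2 = ‖pz‖ ^ 2 - 2 * ⟪pz, pw⟫ + ‖pw‖ ^ 2 := norm_sub_sq_real pz pw
  have e7 : ⟪z - w, pz - pw⟫ = ⟪z, pz⟫ - ⟪z, pw⟫ - ⟪w, pz⟫ + ⟪w, pw⟫ := by
    simp [inner_sub_left, inner_sub_right]; ring
  rw [e1, e2, e5] at h1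
  rw [e3, e4, e6] at h2
  rw [e6, e7]
  have hmul : L * ((‖pz‖ ^ 2 - 2 * ⟪pz, pw⟫ + ‖pw‖ ^ 2) -
      (⟪z, pz⟫ - ⟪z, pw⟫ - ⟪w, pz⟫ + ⟪w, pw⟫)) ≤ L * 0 := by linarith [h1, h2]
  have := (mul_le_mul_iff_right₀ hL).mp hmul
  linarith

lemma nonexp (hL : 0 < L) (z w : E) :
    ‖pmap L y c hN z - pmap L y c hN w‖ ≤ ‖z - w‖ := by
  have h1 := firm L y c hN hL z w
  have h2 := real_inner_le_norm (z - w) (pmap L y c hN z - pmap L y c hN w)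
  nlinarith [norm_nonneg (pmap L y c hN z - pmap L y c hN w), norm_nonneg (z - w)]

lemma sandwich_upper (z w : E) :
    fenv L y c hN w ≤ fenv L y c hN z + L * ⟪z - pmap L y c hN z, w - z⟫
      + L / 2 * ‖w - z‖ ^ 2 := by
  have h1 := fenv_le L y c hN w (asel_mem L y c hN z)
  have hq : Qf L y c w (asel L y c hN z)
      = L / 2 * ‖w - pmap L y c hN z‖ ^ 2 + Sval c (asel L y c hN z) := rfl
  rw [hq] at h1
  have e : ‖w - pmap L y c hN z‖ ^ 2 = ‖z - pmap L y c hN z‖ ^ 2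
      + 2 * ⟪z - pmap L y c hN z, w - z⟫ + ‖w - z‖ ^ 2 := by
    have hv : w - pmap L y c hN z = (z - pmap L y c hN z) + (w - z) := by abel
    rw [hv, norm_add_sq_real]
  rw [e] at h1
  rw [fenv_eq L y c hN z]
  linarith

lemma sandwich_lower (hL : 0 < L) (z w : E) :
    fenv L y c hN z + L * ⟪z - pmap L y c hN z, w - z⟫ - L / 2 * ‖w - z‖ ^ 2
      ≤ fenv L y c hN w := by
  set pz := pmap L y c hN z with hpz
  set pw := pmap L y c hN w with hpw
  have h1 := fenv_le L y c hN z (asel_mem L y c hN w)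
  have hq : Qf L y c z (asel L y c hN w) = L / 2 * ‖z - pw‖ ^ 2 + Sval c (asel L y c hN w) := rfl
  rw [hq] at h1
  have hfw : fenv L y c hN w = L / 2 * ‖w - pw‖ ^ 2 + Sval c (asel L y c hN w) := fenv_eq L y c hN w
  have e : ‖w - pw‖ ^ 2 = ‖z - pw‖ ^ 2 + 2 * ⟪z - pw, w - z⟫ + ‖w - z‖ ^ 2 := by
    have hv : w - pw = (z - pw) + (w - z) := by abel
    rw [hv, norm_add_sq_real]
  have esplit : ⟪z - pw, w - z⟫ = ⟪z - pz, w - z⟫ + ⟪pz - pw, w - z⟫ := by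
    rw [← inner_add_left]; congr 1; abel
  have hcs : -(‖w - z‖ ^ 2) ≤ ⟪pz - pw, w - z⟫ := by
    have h2 := real_inner_le_norm (pw - pz) (w - z)
    have h3 : ⟪pw - pz, w - z⟫ = -⟪pz - pw, w - z⟫ := by
      rw [← inner_neg_left]; congr 1; abel
    have h4 : ‖pw - pz‖ ≤ ‖w - z‖ := nonexp L y c hN hL w z
    have h5 : ‖pw - pz‖ * ‖w - z‖ ≤ ‖w - z‖ * ‖w - z‖ :=
      mul_le_mul_of_nonneg_right h4 (norm_nonneg _)
    nlinarith [norm_nonneg (w - z)]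
  have hL2 : (0:ℝ) ≤ L := hL.le
  have hterm : L / 2 * ‖w - pw‖ ^ 2
      ≥ L / 2 * ‖z - pw‖ ^ 2 + L * ⟪z - pz, w - z⟫ - L / 2 * ‖w - z‖ ^ 2 := by
    rw [e, esplit]
    have := mul_le_mul_of_nonneg_left hcs hL2
    nlinarith
  rw [hfw]
  linarith

lemma hasGradient (hL : 0 < L) (z : E) :
    HasGradientAt (fenv L y c hN) (L • (z - pmap L y c hN z)) z := by
  rw [hasGradientAt_iff_hasFDerivAt]
  rw [hasFDerivAt_iff_isLittleO_nhds_zero]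
  have hkey : ∀ h : E, |fenv L y c hN (z + h) - fenv L y c hN z
      - ⟪L • (z - pmap L y c hN z), h⟫| ≤ L * ‖h‖ ^ 2 := by
    intro h
    have hin : ⟪L • (z - pmap L y c hN z), h⟫ = L * ⟪z - pmap L y c hN z, h⟫ :=
      real_inner_smul_left _ _ _
    have h1 := sandwich_upper L y c hN z (z + h)
    have h2 := sandwich_lower L y c hN hL z (z + h)
    rw [show z + h - z = h by abel] at h1 h2
    rw [hin]
    rw [abs_le]
    constructor <;> nlinarith [mul_nonneg hL.le (sq_nonneg ‖h‖)]
  rw [Asymptotics.isLittleO_iff]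
  intro ε hε
  have hball := Metric.ball_mem_nhds (0 : E) (div_pos hε hL)
  filter_upwards [hball] with h hh
  have hnorm : ‖h‖ < ε / L := by
    rwa [Metric.mem_ball, dist_zero_right] at hh
  have hk := hkey h
  have : ‖fenv L y c hN (z + h) - fenv L y c hN z
      - (InnerProductSpace.toDual ℝ E) (L • (z - pmap L y c hN z)) h‖
      ≤ L * ‖h‖ ^ 2 := by
    rw [Real.norm_eq_abs]
    exact hk
  refine this.trans ?_
  have : L * ‖h‖ ^ 2 = (L * ‖h‖) * ‖h‖ := by ring
  rw [this]
  have hb : L * ‖h‖ ≤ ε := by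
    rw [← le_div_iff₀' hL]
    exact hnorm.le
  exact mul_le_mul_of_nonneg_right hb (norm_nonneg _)

lemma sq_norm_combo_le (u v : E) {a b : ℝ} (ha : 0 ≤ a) (hb : 0 ≤ b) (hab : a + b = 1) :
    ‖a • u + b • v‖ ^ 2 ≤ a * ‖u‖ ^ 2 + b * ‖v‖ ^ 2 := by
  have h1 : ‖a • u + b • v‖ ^ 2 = ‖a • u‖ ^ 2 + 2 * ⟪a • u, b • v⟫ + ‖b • v‖ ^ 2 :=
    norm_add_sq_real _ _
  have h2 : ‖a • u‖ ^ 2 = a ^ 2 * ‖u‖ ^ 2 := by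
    rw [norm_smul, Real.norm_eq_abs, mul_pow, sq_abs]
  have h3 : ‖b • v‖ ^ 2 = b ^ 2 * ‖v‖ ^ 2 := by
    rw [norm_smul, Real.norm_eq_abs, mul_pow, sq_abs]
  have h4 : ⟪a • u, b • v⟫ = a * (b * ⟪u, v⟫) := by
    rw [real_inner_smul_left, real_inner_smul_right]
  have h5 : ‖u - v‖ ^ 2 = ‖u‖ ^ 2 - 2 * ⟪u, v⟫ + ‖v‖ ^ 2 := norm_sub_sq_real u v
  have key : a * ‖u‖ ^ 2 + b * ‖v‖ ^ 2 - ‖a • u + b • v‖ ^ 2 = a * b * ‖u - v‖ ^ 2 := by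
    rw [h1, h2, h3, h4, h5]
    linear_combination (-(a * ‖u‖ ^ 2 + b * ‖v‖ ^ 2)) * hab
  nlinarith [mul_nonneg (mul_nonneg ha hb) (sq_nonneg ‖u - v‖), key]

lemma convexOn_fenv (hL : 0 < L) : ConvexOn ℝ Set.univ (fenv L y c hN) := by
  refine ⟨convex_univ, fun z _ w _ a b ha hb hab => ?_⟩
  have hmem : a • asel L y c hN z + b • asel L y c hN w ∈ stdSimplex ℝ (Fin N) :=
    convex_stdSimplex ℝ (Fin N) (asel_mem L y c hN z) (asel_mem L y c hN w) ha hb hab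
  refine (fenv_le L y c hN _ hmem).trans ?_
  rw [Qf, Amap_combo, Sval_combo]
  have hvec : a • z + b • w - (a • Amap y (asel L y c hN z) + b • Amap y (asel L y c hN w))
      = a • (z - pmap L y c hN z) + b • (w - pmap L y c hN w) := by
    simp only [pmap, smul_sub]; abel
  rw [hvec]
  have hkey := sq_norm_combo_le (z - pmap L y c hN z) (w - pmap L y c hN w) ha hb hab
  have hmul := mul_le_mul_of_nonneg_left hkey (by positivity : (0:ℝ) ≤ L / 2)
  have hfz : fenv L y c hN z = L / 2 * ‖z - pmap L y c hN z‖ ^ 2 + Sval c (asel L y c hN z) :=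
    fenv_eq L y c hN z
  have hfw : fenv L y c hN w = L / 2 * ‖w - pmap L y c hN w‖ ^ 2 + Sval c (asel L y c hN w) :=
    fenv_eq L y c hN w
  rw [hfz, hfw]
  simp only [smul_eq_mul]
  nlinarith [hmul]

end SCIAux2


open SCIAux SCIAux2 in
/-- Sufficiency part of Theorem 2.2 (smooth convex interpolation): any finite set of triples
`(x⁽ⁿ⁾, g⁽ⁿ⁾, f⁽ⁿ⁾)` satisfying the interpolation inequalities can be interpolated by a
convex, differentiable, `L`-smooth function `f : ℝ^d → ℝ`. -/
theorem smooth_convex_interpolation_sufficiency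
    {δ : ℕ} (L : ℝ) (hLpos : 0 < L) (N : ℕ)
    (x g : Fin N → EuclideanSpace ℝ (Fin δ)) (fv : Fin N → ℝ)
    (hinterp : ∀ n l : Fin N,
      fv l + ⟪g l, x n - x l⟫ + 1 / (2 * L) * ‖g n - g l‖ ^ 2 ≤ fv n) :
    ∃ f : EuclideanSpace ℝ (Fin δ) → ℝ,
      ConvexOn ℝ Set.univ f ∧
      Differentiable ℝ f ∧
      (∀ y h : EuclideanSpace ℝ (Fin δ),
        ‖gradient f (y + h) - gradient f y‖ ≤ L * ‖h‖) ∧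
      (∀ n : Fin N, f (x n) = fv n ∧ gradient f (x n) = g n) := by
  classical
  rcases Nat.eq_zero_or_pos N with hN0 | hN
  · refine ⟨fun _ => 0, convexOn_const 0 convex_univ, differentiable_const 0, ?_, ?_⟩
    · intro yv h
      rw [gradient_fun_const, gradient_fun_const, sub_zero, norm_zero]
      positivity
    · intro n
      exact absurd n.2 (by omega)
  · set y' : Fin N → EuclideanSpace ℝ (Fin δ) := fun i => x i - L⁻¹ • g i with hy'
    set c' : Fin N → ℝ := fun i => fv i - ‖g i‖ ^ 2 / (2 * L) with hc'
    refine ⟨fenv L y' c' hN, convexOn_fenv L y' c' hN hLpos, ?_, ?_, ?_⟩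
    · exact fun z => (hasGradient L y' c' hN hLpos z).differentiableAt
    · intro zy h
      rw [(hasGradient L y' c' hN hLpos (zy + h)).gradient,
        (hasGradient L y' c' hN hLpos zy).gradient]
      set pz := pmap L y' c' hN (zy + h) with hpz
      set pw := pmap L y' c' hN zy with hpw
      have hvec : L • (zy + h - pz) - L • (zy - pw) = L • (h - (pz - pw)) := by
        rw [← smul_sub]; congr 1; abel
      rw [hvec, norm_smul, Real.norm_eq_abs, abs_of_pos hLpos]
      have hfi := firm L y' c' hN hLpos (zy + h) zy
      rw [show zy + h - zy = h by abel, ← hpz, ← hpw] at hfi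
      have hsq : ‖h - (pz - pw)‖ ^ 2 ≤ ‖h‖ ^ 2 := by
        have e : ‖h - (pz - pw)‖ ^ 2 = ‖h‖ ^ 2 - 2 * ⟪h, pz - pw⟫ + ‖pz - pw‖ ^ 2 :=
          norm_sub_sq_real _ _
        rw [e]; linarith [hfi, sq_nonneg ‖pz - pw‖]
      have hle : ‖h - (pz - pw)‖ ≤ ‖h‖ := by
        have h1 := Real.sqrt_le_sqrt hsq
        rwa [Real.sqrt_sq (norm_nonneg _), Real.sqrt_sq (norm_nonneg _)] at h1
      exact mul_le_mul_of_nonneg_left hle hLpos.le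
    · intro n
      have hsingle_mem := single_mem_stdSimplex ℝ (ι := Fin N) n
      have hAsingle : Amap y' (Pi.single n 1) = y' n := by
        rw [Amap, Finset.sum_eq_single n]
        · simp
        · intro i _ hi; simp [Pi.single_apply, hi]
        · simp
      have hSsingle : Sval c' (Pi.single n 1) = c' n := by
        rw [Sval, Finset.sum_eq_single n]
        · simp
        · intro i _ hi; simp [Pi.single_apply, hi]
        · simp
      have hxy : x n - y' n = L⁻¹ • g n := by
        simp only [hy']; abel
      have hQs : Qf L y' c' (x n) (Pi.single n 1) = fv n := by
        rw [Qf, hAsingle, hSsingle, hxy, norm_smul, Real.norm_eq_abs,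
          abs_of_pos (inv_pos.mpr hLpos), hc']
        have hL0 : L ≠ 0 := hLpos.ne'
        field_simp
        ring
      -- lower bound : every simplex point gives at least fv n
      have hlow : ∀ β ∈ stdSimplex ℝ (Fin N), fv n ≤ Qf L y' c' (x n) β := by
        intro β hβ
        have hβ1 : ∑ i, β i = 1 := hβ.2
        have hquad : ⟪g n, x n - Amap y' β⟫ - ‖g n‖ ^ 2 / (2 * L)
            ≤ L / 2 * ‖x n - Amap y' β‖ ^ 2 := by
          set d := x n - Amap y' β with hd
          have h0 : (0:ℝ) ≤ L / 2 * ‖d - L⁻¹ • g n‖ ^ 2 := by positivity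
          have he : ‖d - L⁻¹ • g n‖ ^ 2
              = ‖d‖ ^ 2 - 2 * (L⁻¹ * ⟪d, g n⟫) + (L⁻¹) ^ 2 * ‖g n‖ ^ 2 :=
            norm_sub_smul_sq d (g n) L⁻¹
          rw [he] at h0
          have hcomm : ⟪g n, d⟫ = ⟪d, g n⟫ := real_inner_comm _ _
          rw [hcomm]
          have hL0 : L ≠ 0 := hLpos.ne'
          have e1 : L / 2 * (2 * (L⁻¹ * ⟪d, g n⟫)) = ⟪d, g n⟫ := by
            field_simp
          have e2 : L / 2 * ((L⁻¹) ^ 2 * ‖g n‖ ^ 2) = ‖g n‖ ^ 2 / (2 * L) := by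
            field_simp
          nlinarith [h0, e1, e2]
        have hterm : ∀ i, fv n ≤ ⟪g n, x n - y' i⟫ - ‖g n‖ ^ 2 / (2 * L) + c' i := by
          intro i
          have hI := hinterp i n
          have e0 : ‖g i - g n‖ ^ 2 = ‖g i‖ ^ 2 - 2 * ⟪g n, g i⟫ + ‖g n‖ ^ 2 := by
            rw [norm_sub_sq_real, real_inner_comm]
          rw [e0] at hI
          have hv : x n - y' i = (x n - x i) + L⁻¹ • g i := by
            simp only [hy']; abel
          have e1 : ⟪g n, x n - y' i⟫ = ⟪g n, x n - x i⟫ + L⁻¹ * ⟪g n, g i⟫ := by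
            rw [hv, inner_add_right, real_inner_smul_right]
          have e2 : ⟪g n, x i - x n⟫ = -⟪g n, x n - x i⟫ := by
            rw [← inner_neg_right]; congr 1; abel
          rw [e2] at hI
          rw [e1]
          simp only [hc']
          have hL0 : L ≠ 0 := hLpos.ne'
          have e3 : 1 / (2 * L) * (‖g i‖ ^ 2 - 2 * ⟪g n, g i⟫ + ‖g n‖ ^ 2)
              = ‖g i‖ ^ 2 / (2 * L) - L⁻¹ * ⟪g n, g i⟫ + ‖g n‖ ^ 2 / (2 * L) := by
            field_simp
          rw [e3] at hI
          linarith
        have hsum : ⟪g n, x n - Amap y' β⟫ - ‖g n‖ ^ 2 / (2 * L) + Sval c' β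
            = ∑ i, β i * (⟪g n, x n - y' i⟫ - ‖g n‖ ^ 2 / (2 * L) + c' i) := by
          have hA : ⟪g n, Amap y' β⟫ = ∑ i, β i * ⟪g n, y' i⟫ := by
            rw [Amap, inner_sum]
            exact Finset.sum_congr rfl fun i _ => real_inner_smul_right _ _ _
          have hexp : ∀ i, β i * (⟪g n, x n - y' i⟫ - ‖g n‖ ^ 2 / (2 * L) + c' i)
              = β i * ⟪g n, x n⟫ - β i * ⟪g n, y' i⟫
                - β i * (‖g n‖ ^ 2 / (2 * L)) + β i * c' i := by
            intro i; rw [inner_sub_right]; ring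
          rw [Finset.sum_congr rfl fun i _ => hexp i]
          rw [Finset.sum_add_distrib, Finset.sum_sub_distrib, Finset.sum_sub_distrib,
            ← Finset.sum_mul, ← Finset.sum_mul, hβ1, inner_sub_right, hA]
          simp only [Sval]
          ring
        calc fv n = ∑ i, β i * fv n := by rw [← Finset.sum_mul, hβ1, one_mul]
          _ ≤ ∑ i, β i * (⟪g n, x n - y' i⟫ - ‖g n‖ ^ 2 / (2 * L) + c' i) :=
              Finset.sum_le_sum fun i _ =>
                mul_le_mul_of_nonneg_left (hterm i) (hβ.1 i)
          _ = ⟪g n, x n - Amap y' β⟫ - ‖g n‖ ^ 2 / (2 * L) + Sval c' β := hsum.symm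
          _ ≤ L / 2 * ‖x n - Amap y' β‖ ^ 2 + Sval c' β := by linarith [hquad]
          _ = Qf L y' c' (x n) β := rfl
      have hup : fenv L y' c' hN (x n) ≤ fv n := by
        have := fenv_le L y' c' hN (x n) hsingle_mem
        rwa [hQs] at this
      have hfeq : fenv L y' c' hN (x n) = fv n :=
        le_antisymm hup (hlow _ (asel_mem L y' c' hN (x n)))
      refine ⟨hfeq, ?_⟩
      -- gradient at x n
      have hstrong := strong L y' c' hN hLpos (x n) hsingle_mem
      rw [hAsingle, hQs, hfeq] at hstrong
      set P := pmap L y' c' hN (x n) with hP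
      have hq : L / 2 * ‖y' n - P‖ ^ 2 ≤ L / 2 * 0 := by rw [mul_zero]; linarith [hstrong]
      have hsq0 : ‖y' n - P‖ ^ 2 ≤ 0 := (mul_le_mul_iff_right₀ (by positivity)).mp hq
      have h1 : ‖y' n - P‖ ^ 2 = 0 := le_antisymm hsq0 (sq_nonneg _)
      have h0 : ‖y' n - P‖ = 0 := pow_eq_zero_iff (two_ne_zero) |>.mp h1
      have hp : P = y' n := (sub_eq_zero.mp (norm_eq_zero.mp h0)).symm
      rw [(hasGradient L y' c' hN hLpos (x n)).gradient, ← hP, hp, hxy,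
        smul_inv_smul₀ hLpos.ne']
end
end
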